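/- Let K be a valued field of characteristic 0 and finite residue characteristic p, let A ⊂ K be finite, and choose ℓ with |A| < p^ℓ; set λ = |p^ℓ|. For a ∈ A define D_a = {rv_λ(a − v) : v ∈ A}. Then for all a, a' ∈ A, a = a' if and only if D_a = D_{a'}. -/

import Mathlib

/-!
If `D_a ⊆ D_{a'}` and `d = a - a' ≠ 0`, choose `g : A → A` with
`rv_λ (a - u) = rv_λ (a' - g u)`. Then the orbit `u_n = gⁿ a` satisfies
`v (a - u_n - n d) < λ v(d)` by induction. The orbit repeats within `|A|` steps, which gives
`v (m d) < λ v(d)` for some `0 < m ≤ |A| < p^ℓ`; but `v m = v(p)^{v_p(m)} > v(p)^ℓ = λ`.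
-/

/-- `rveq v lam x y` expresses `rv_lam x = rv_lam y` in the leading-term structure
`RV_lam = K^× / B_{<lam}(1) ∪ {0}`: for `x ≠ 0` it means `v (x - y) < lam * v x`,
and `rv_lam 0 = 0` is only equal to `rv_lam y` for `y = 0`. -/
def rveq {K : Type*} [Field K] {Γ₀ : Type*} [LinearOrderedCommGroupWithZero Γ₀]
    (v : Valuation K Γ₀) (lam : Γ₀) (x y : K) : Prop :=
  v (x - y) < lam * v x ∨ (x = 0 ∧ y = 0)

open Finset Function

section Valuation

variable {K : Type*} [Field K] {Γ₀ : Type*} [LinearOrderedCommGroupWithZero Γ₀]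
  (v : Valuation K Γ₀)

theorem Valuation.natCast_le_one (n : ℕ) : v (n : K) ≤ 1 :=
  natCast_mem v.integer n

theorem Valuation.natCast_eq_one_of_coprime {p m : ℕ} (hvp : v (p : K) < 1)
    (hm : m.Coprime p) : v (m : K) = 1 := by
  refine (v.natCast_le_one m).antisymm ?_
  have hbezout : (1 : K) = m * (m.gcdA p : K) + p * (m.gcdB p : K) := by
    exact_mod_cast congrArg (Int.cast : ℤ → K) (hm ▸ Nat.gcd_eq_gcd_ab m p)
  have hle : (1 : Γ₀) ≤ max (v m) (v p) := by
    calc (1 : Γ₀) = v (m * (m.gcdA p : K) + p * (m.gcdB p : K)) := by rw [← hbezout, v.map_one]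
      _ ≤ max (v (m * (m.gcdA p : K))) (v (p * (m.gcdB p : K))) := v.map_add _ _
      _ ≤ max (v m) (v p) := by
        simp only [v.map_mul]
        gcongr <;> exact mul_le_of_le_one_right' (intCast_mem v.integer _)
  exact (le_max_iff.mp hle).resolve_right hvp.not_ge

theorem Valuation.natCast_eq_pow_factorization {p : ℕ} (hp : p.Prime) (hvp : v (p : K) < 1)
    (m : ℕ) (hm : m ≠ 0) : v (m : K) = v (p : K) ^ m.factorization p := by
  conv_lhs => rw [← Nat.ordProj_mul_ordCompl_eq_self m p]
  rw [Nat.cast_mul, Nat.cast_pow, v.map_mul, v.map_pow,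
    v.natCast_eq_one_of_coprime hvp (Nat.coprime_ordCompl hp hm).symm, mul_one]

theorem Valuation.pow_lt_natCast [CharZero K] {p : ℕ} (hp : p.Prime) (hvp : v (p : K) < 1)
    {ℓ m : ℕ} (hm : 0 < m) (hmℓ : m < p ^ ℓ) : v (p : K) ^ ℓ < v (m : K) := by
  have hvp0 : 0 < v (p : K) := v.pos_iff.mpr (Nat.cast_ne_zero.mpr hp.ne_zero)
  have hfac : m.factorization p < ℓ :=
    (Nat.pow_lt_pow_iff_right hp.one_lt).mp ((Nat.ordProj_le p hm.ne').trans_lt hmℓ)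
  rw [v.natCast_eq_pow_factorization hp hvp m hm.ne']
  exact pow_lt_pow_right_of_lt_one₀ hvp0 hvp hfac

end Valuation

theorem exists_iterate_eq_of_mapsTo {α : Type*} {s : Finset α} {g : α → α}
    (hgs : Set.MapsTo g s s) {a : α} (ha : a ∈ s) :
    ∃ i ≤ #s, ∃ j < i, g^[i] a = g^[j] a := by
  obtain ⟨i, hi, j, hj, hij, heq⟩ := exists_ne_map_eq_of_card_lt_of_maps_to
    (s := range (#s + 1)) (by simp) (f := fun n => g^[n] a) (fun n _ => hgs.iterate n ha)
  simp only [mem_range, Nat.lt_succ_iff] at hi hj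
  rcases hij.lt_or_gt with h | h
  · exact ⟨j, hj, i, h, heq.symm⟩
  · exact ⟨i, hi, j, h, heq⟩

section Rveq

variable {K : Type*} [Field K] {Γ₀ : Type*} [LinearOrderedCommGroupWithZero Γ₀]
  {v : Valuation K Γ₀} {lam : Γ₀}

theorem rveq_refl (hlam : lam ≠ 0) (x : K) : rveq v lam x x := by
  by_cases hx : x = 0
  · exact Or.inr ⟨hx, hx⟩
  · left
    rw [sub_self, v.map_zero]
    exact zero_lt_iff.mpr (mul_ne_zero hlam (v.ne_zero_iff.mpr hx))

theorem rveq.valuation_sub_lt {x y : K} {δ : Γ₀} (h : rveq v lam x y) (hlam : lam ≠ 0)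
    (hδ : δ ≠ 0) (hx : v x ≤ δ) : v (x - y) < lam * δ := by
  rcases h with h | ⟨rfl, rfl⟩
  · exact h.trans_le (mul_le_mul_right hx lam)
  · rw [sub_zero, v.map_zero]
    exact zero_lt_iff.mpr (mul_ne_zero hlam hδ)

theorem valuation_sub_iterate_sub_lt (hlam : lam ≠ 0) (hlam1 : lam ≤ 1) {a a' : K}
    (hne : a ≠ a') {s : Set K} {g : K → K} (hgs : Set.MapsTo g s s) (ha : a ∈ s)
    (hg : ∀ x ∈ s, rveq v lam (a - x) (a' - g x)) (n : ℕ) :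
    v (a - g^[n] a - n * (a - a')) < lam * v (a - a') := by
  have hδ : v (a - a') ≠ 0 := v.ne_zero_iff.mpr (sub_ne_zero.mpr hne)
  induction n with
  | zero => simpa using zero_lt_iff.mpr (mul_ne_zero hlam hδ)
  | succ n ih =>
    set x := g^[n] a
    have hx_le : v (a - x) ≤ v (a - a') := by
      calc v (a - x) = v ((a - x - n * (a - a')) + n * (a - a')) := by ring_nf
        _ ≤ max (v (a - x - n * (a - a'))) (v (n * (a - a'))) := v.map_add _ _
        _ ≤ v (a - a') := by
          refine max_le (ih.le.trans (mul_le_of_le_one_left' hlam1)) ?_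
          rw [v.map_mul]
          exact mul_le_of_le_one_left' (v.natCast_le_one n)
    have hstep := (hg x (hgs.iterate n ha)).valuation_sub_lt hlam hδ hx_le
    rw [iterate_succ_apply']
    calc v (a - g x - ↑(n + 1) * (a - a'))
        = v ((a - x - n * (a - a')) - ((a - x) - (a' - g x))) := by push_cast; ring_nf
      _ ≤ max (v (a - x - n * (a - a'))) (v ((a - x) - (a' - g x))) := v.map_sub _ _
      _ < lam * v (a - a') := max_lt ih hstep

theorem eq_of_forall_exists_rveq (hlam : lam ≠ 0) {A : Finset K}
    (hA : ∀ m : ℕ, 0 < m → m ≤ #A → lam ≤ v (m : K)) {a a' : K} (ha : a ∈ A)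
    (h : ∀ u ∈ A, ∃ u' ∈ A, rveq v lam (a - u) (a' - u')) : a = a' := by
  by_contra hne
  choose! g hgA hg using h
  have hlam1 : lam ≤ 1 := by simpa using hA 1 one_pos (card_pos.mpr ⟨a, ha⟩)
  have horbit := valuation_sub_iterate_sub_lt hlam hlam1 hne hgA ha hg
  obtain ⟨i, hi, j, hji, heq⟩ := exists_iterate_eq_of_mapsTo hgA ha
  have hsmall : v ((i - j : ℕ) * (a - a')) < lam * v (a - a') := by
    calc v ((i - j : ℕ) * (a - a'))
        = v ((a - g^[j] a - j * (a - a')) - (a - g^[i] a - i * (a - a'))) := by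
          rw [Nat.cast_sub hji.le, heq]; ring_nf
      _ ≤ max (v (a - g^[j] a - j * (a - a'))) (v (a - g^[i] a - i * (a - a'))) := v.map_sub _ _
      _ < lam * v (a - a') := max_lt (horbit j) (horbit i)
  rw [v.map_mul] at hsmall
  exact (lt_of_mul_lt_mul_right hsmall zero_le).not_ge (hA _ (by omega) (by omega))

end Rveq

/-- mixed characteristic case of Lemma `lem.finite`: residue characteristic
`p`, `A ⊆ K` finite with `|A| < p^ℓ`, `λ = v(p)^ℓ`. With `D_a = {rv_λ (a - u) : u ∈ A}`,
for `a, a' ∈ A` we have `a = a'` iff `D_a = D_{a'}`. -/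
theorem stmt5 {K : Type*} [Field K] [CharZero K] {Γ₀ : Type*}
    [LinearOrderedCommGroupWithZero Γ₀]
    (v : Valuation K Γ₀) (p : ℕ) (hp : p.Prime) (hvp : v (p : K) < 1)
    (A : Finset K) (ℓ : ℕ) (hcard : A.card < p ^ ℓ) :
    ∀ a ∈ A, ∀ a' ∈ A,
      (a = a' ↔
        ((∀ u ∈ A, ∃ u' ∈ A, rveq v ((v (p : K)) ^ ℓ) (a - u) (a' - u')) ∧
         (∀ u' ∈ A, ∃ u ∈ A, rveq v ((v (p : K)) ^ ℓ) (a' - u') (a - u)))) := by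
  have hlam : v (p : K) ^ ℓ ≠ 0 :=
    pow_ne_zero ℓ (v.ne_zero_iff.mpr (Nat.cast_ne_zero.mpr hp.ne_zero))
  intro a ha a' _
  constructor
  · rintro rfl
    exact ⟨fun u hu => ⟨u, hu, rveq_refl hlam _⟩, fun u hu => ⟨u, hu, rveq_refl hlam _⟩⟩
  · rintro ⟨h, -⟩
    refine eq_of_forall_exists_rveq hlam (fun m hm hmA => ?_) ha h
    exact (v.pow_lt_natCast hp hvp hm (hmA.trans_lt hcard)).le
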